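/- arXiv:1603.00238 — 2 statements merged into one kernel-verified Lean document; each statement's English description precedes it below -/
import Mathlib

section
/- For a smooth function v(x,y,t), the operators X = ∂_y - (λ - v_x)∂_x and Y = ∂_t - λ∂_y + v_y ∂_x commute for all values of λ if and only if v satisfies the Pavlov equation v_{tx} = v_{yy} + v_x v_{xy} - v_y v_{xx}. -/
/- STATEMENT 4: For smooth v(x,y,t), the operators X = ∂_y - (λ - v_x)∂_x and
Y = ∂_t - λ∂_y + v_y∂_x commute for all λ iff v satisfies the Pavlov equation
v_{tx} = v_{yy} + v_x v_{xy} - v_y v_{xx}.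
Coordinates on ℝ³: 0 = x, 1 = y, 2 = t. -/

noncomputable def pd {n : ℕ} (i : Fin n) (f : (Fin n → ℝ) → ℝ) : (Fin n → ℝ) → ℝ :=
  fun x => fderiv ℝ f x (Pi.single i 1)

lemma pd_contDiff {n : ℕ} {f : (Fin n → ℝ) → ℝ} (hf : ContDiff ℝ (⊤ : ℕ∞) f) (i : Fin n) :
    ContDiff ℝ (⊤ : ℕ∞) (pd i f) :=
  (hf.fderiv_right (m := (⊤ : ℕ∞)) (by simp)).clm_apply contDiff_const

lemma pd_add {n : ℕ} {f g : (Fin n → ℝ) → ℝ} {p} (hf : DifferentiableAt ℝ f p)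
    (hg : DifferentiableAt ℝ g p) (i : Fin n) :
    pd i (fun x => f x + g x) p = pd i f p + pd i g p := by
  simp [pd, fderiv_fun_add hf hg]

lemma pd_sub {n : ℕ} {f g : (Fin n → ℝ) → ℝ} {p} (hf : DifferentiableAt ℝ f p)
    (hg : DifferentiableAt ℝ g p) (i : Fin n) :
    pd i (fun x => f x - g x) p = pd i f p - pd i g p := by
  simp [pd, fderiv_fun_sub hf hg]

lemma pd_mul {n : ℕ} {f g : (Fin n → ℝ) → ℝ} {p} (hf : DifferentiableAt ℝ f p)
    (hg : DifferentiableAt ℝ g p) (i : Fin n) :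
    pd i (fun x => f x * g x) p = pd i f p * g p + f p * pd i g p := by
  simp [pd, fderiv_fun_mul hf hg]; ring

lemma pd_const_mul {n : ℕ} {f : (Fin n → ℝ) → ℝ} {p} (hf : DifferentiableAt ℝ f p)
    (c : ℝ) (i : Fin n) :
    pd i (fun x => c * f x) p = c * pd i f p := by
  simp [pd, fderiv_const_mul hf c]

lemma pd_comm {n : ℕ} {f : (Fin n → ℝ) → ℝ} (hf : ContDiff ℝ (⊤ : ℕ∞) f) (i j : Fin n) (p) :
    pd i (pd j f) p = pd j (pd i f) p := by
  have hsym : IsSymmSndFDerivAt ℝ f p := hf.contDiffAt.isSymmSndFDerivAt (by rw [minSmoothness_of_isRCLikeNormedField]; exact WithTop.coe_le_coe.mpr (le_top : (2 : ℕ∞) ≤ ⊤))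
  have hd : DifferentiableAt ℝ (fderiv ℝ f) p :=
    (hf.fderiv_right (m := (⊤ : ℕ∞)) (by simp)).differentiable (by simp) |>.differentiableAt
  have key : ∀ u w : Fin n → ℝ,
      fderiv ℝ (fun x => fderiv ℝ f x u) p w = fderiv ℝ (fderiv ℝ f) p w u := by
    intro u w
    have := fderiv_clm_apply (c := fderiv ℝ f) (u := fun _ => u) hd (differentiableAt_const u)
    simp [this]
  change fderiv ℝ (fun x => fderiv ℝ f x (Pi.single j 1)) p (Pi.single i 1)
      = fderiv ℝ (fun x => fderiv ℝ f x (Pi.single i 1)) p (Pi.single j 1)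
  rw [key, key]
  exact hsym _ _

lemma pd_const_sub {n : ℕ} {f : (Fin n → ℝ) → ℝ} {p} (hf : DifferentiableAt ℝ f p)
    (c : ℝ) (i : Fin n) :
    pd i (fun x => c - f x) p = - pd i f p := by
  simp [pd, fderiv_fun_sub (differentiableAt_const c) hf]

/-- X = ∂_y - (λ - v_x)∂_x -/
noncomputable def Xop (v : (Fin 3 → ℝ) → ℝ) (lam : ℝ) (f : (Fin 3 → ℝ) → ℝ) :
    (Fin 3 → ℝ) → ℝ :=
  fun p => pd 1 f p - (lam - pd 0 v p) * pd 0 f p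

/-- Y = ∂_t - λ∂_y + v_y ∂_x -/
noncomputable def Yop (v : (Fin 3 → ℝ) → ℝ) (lam : ℝ) (f : (Fin 3 → ℝ) → ℝ) :
    (Fin 3 → ℝ) → ℝ :=
  fun p => pd 2 f p - lam * pd 1 f p + pd 1 v p * pd 0 f p

lemma pd_Yop {v f : (Fin 3 → ℝ) → ℝ} (hv : ContDiff ℝ (⊤ : ℕ∞) v) (hf : ContDiff ℝ (⊤ : ℕ∞) f)
    (lam : ℝ) (i : Fin 3) (p : Fin 3 → ℝ) :
    pd i (Yop v lam f) p = pd i (pd 2 f) p - lam * pd i (pd 1 f) p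
      + (pd i (pd 1 v) p * pd 0 f p + pd 1 v p * pd i (pd 0 f) p) := by
  have d : ∀ (g : (Fin 3 → ℝ) → ℝ), ContDiff ℝ (⊤ : ℕ∞) g → DifferentiableAt ℝ g p :=
    fun g hg => hg.differentiable (by simp) |>.differentiableAt
  have h0 := pd_contDiff hf 0
  have h1 := pd_contDiff hf 1
  have h2 := pd_contDiff hf 2
  have hv1 := pd_contDiff hv 1
  have e1 : Yop v lam f
      = fun x => (pd 2 f x - lam * pd 1 f x) + pd 1 v x * pd 0 f x := rfl
  rw [e1, pd_add (by exact d _ (h2.sub (contDiff_const.mul h1))) (d _ (hv1.mul h0)) i,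
    pd_sub (d _ h2) (d _ (contDiff_const.mul h1)) i,
    pd_const_mul (d _ h1) lam i, pd_mul (d _ hv1) (d _ h0) i]

lemma pd_Xop {v f : (Fin 3 → ℝ) → ℝ} (hv : ContDiff ℝ (⊤ : ℕ∞) v) (hf : ContDiff ℝ (⊤ : ℕ∞) f)
    (lam : ℝ) (i : Fin 3) (p : Fin 3 → ℝ) :
    pd i (Xop v lam f) p = pd i (pd 1 f) p
      - ((- pd i (pd 0 v) p) * pd 0 f p + (lam - pd 0 v p) * pd i (pd 0 f) p) := by
  have d : ∀ (g : (Fin 3 → ℝ) → ℝ), ContDiff ℝ (⊤ : ℕ∞) g → DifferentiableAt ℝ g p :=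
    fun g hg => hg.differentiable (by simp) |>.differentiableAt
  have h0 := pd_contDiff hf 0
  have h1 := pd_contDiff hf 1
  have hv0 := pd_contDiff hv 0
  have e1 : Xop v lam f
      = fun x => pd 1 f x - (lam - pd 0 v x) * pd 0 f x := rfl
  rw [e1, pd_sub (d _ h1) (d _ ((contDiff_const.sub hv0).mul h0)) i,
    pd_mul (d _ (contDiff_const.sub hv0)) (d _ h0) i,
    pd_const_sub (d _ hv0) lam i]

lemma comm_key {v f : (Fin 3 → ℝ) → ℝ} (hv : ContDiff ℝ (⊤ : ℕ∞) v) (hf : ContDiff ℝ (⊤ : ℕ∞) f)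
    (lam : ℝ) (p : Fin 3 → ℝ) :
    Xop v lam (Yop v lam f) p - Yop v lam (Xop v lam f) p
      = (pd 1 (pd 1 v) p + pd 0 v p * pd 1 (pd 0 v) p - pd 1 v p * pd 0 (pd 0 v) p
          - pd 0 (pd 2 v) p) * pd 0 f p := by
  have eX : Xop v lam (Yop v lam f) p
      = pd 1 (Yop v lam f) p - (lam - pd 0 v p) * pd 0 (Yop v lam f) p := rfl
  have eY : Yop v lam (Xop v lam f) p
      = pd 2 (Xop v lam f) p - lam * pd 1 (Xop v lam f) p
        + pd 1 v p * pd 0 (Xop v lam f) p := rfl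
  rw [eX, eY, pd_Yop hv hf lam 1 p, pd_Yop hv hf lam 0 p,
    pd_Xop hv hf lam 2 p, pd_Xop hv hf lam 1 p, pd_Xop hv hf lam 0 p,
    pd_comm hf 1 2 p, pd_comm hf 0 2 p, pd_comm hf 0 1 p,
    pd_comm hv 0 1 p, pd_comm hv 0 2 p]
  ring

lemma pd_coord (q : Fin 3 → ℝ) :
    pd 0 (fun x : Fin 3 → ℝ => x 0) q = 1 := by
  have e : (fun x : Fin 3 → ℝ => x 0)
      = ⇑(ContinuousLinearMap.proj (R := ℝ) (φ := fun _ : Fin 3 => ℝ) 0) := rfl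
  have h : HasFDerivAt (fun x : Fin 3 → ℝ => x 0)
      (ContinuousLinearMap.proj (R := ℝ) (φ := fun _ : Fin 3 => ℝ) 0) q := by
    rw [e]; exact ContinuousLinearMap.hasFDerivAt _
  simp [pd, h.fderiv]

theorem stmt4 (v : (Fin 3 → ℝ) → ℝ) (hv : ContDiff ℝ (⊤ : ℕ∞) v) :
    (∀ (lam : ℝ) (f : (Fin 3 → ℝ) → ℝ), ContDiff ℝ (⊤ : ℕ∞) f →
        ∀ p, Xop v lam (Yop v lam f) p = Yop v lam (Xop v lam f) p) ↔
    (∀ p, pd 0 (pd 2 v) p =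
        pd 1 (pd 1 v) p + pd 0 v p * pd 1 (pd 0 v) p - pd 1 v p * pd 0 (pd 0 v) p) := by
  constructor
  · intro h p
    have hf : ContDiff ℝ (⊤ : ℕ∞) (fun x : Fin 3 → ℝ => x 0) :=
      (ContinuousLinearMap.proj (R := ℝ) (φ := fun _ : Fin 3 => ℝ) 0).contDiff
    have hc := comm_key hv hf 0 p
    rw [h 0 _ hf p, sub_self, pd_coord p] at hc
    simp at hc
    linarith
  · intro h lam f hf p
    have hc := comm_key hv hf lam p
    have hz : pd 1 (pd 1 v) p + pd 0 v p * pd 1 (pd 0 v) p - pd 1 v p * pd 0 (pd 0 v) p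
        - pd 0 (pd 2 v) p = 0 := by have := h p; linarith
    rw [hz, zero_mul] at hc
    linarith
end

section
/- Let Ψ = Σ_{n=0}^∞ λⁿ t_n + Ψ̃ with Ψ̃ = Σ_{n≥1}Ψ_n(t)λ^{-n} satisfy the universal-hierarchy generating equation (Ψ_x^{-1} dΨ)₋ = 0 (in finitely many times). Define Ψ' = x + Ψ̃, replacing the full vacuum part by x = t₀. Then Ψ' satisfies the four-dimensional universal hierarchy generating equation ((Ψ'_x)^{-1} dΨ' ∧ Σ_{n≥0}λⁿ dt_{n+1})₋ = 0, because (Ψ'_x)^{-1}dΨ' ∧ Σλⁿdt_{n+1} = (Ψ_x^{-1}dΨ) ∧ Σλⁿdt_{n+1}, since dΨ - dΨ' = Σ_{n≥1}λⁿdt_n = λ·Σ_{n≥0}λⁿdt_{n+1}, which wedges to zero with Σ_{n≥0}λⁿdt_{n+1}. -/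
/- STATEMENT 16: If Ψ = Σ_{n=0}^N λⁿ t_n + Ψ̃ (with Ψ̃ = Σ_{n≥1}Ψ_nλ^{-n}) satisfies the
universal-hierarchy generating relation (Ψ_x⁻¹ dΨ)₋ = 0, then Ψ' = x + Ψ̃ satisfies the
four-dimensional universal hierarchy generating relation
((Ψ'_x)⁻¹ dΨ' ∧ Σ_{n≥0}λⁿ dt_{n+1})₋ = 0.

Laurent objects are modelled in `LaurentSeries ℝ = HahnSeries ℤ ℝ` in the variable
X = λ⁻¹, so that the coefficient of λⁿ is the coefficient at index `-n`, and the
projection (·)₋ onto negative λ-powers corresponds to coefficients at positive indices.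
Forms are handled componentwise: the dt_i-component of dΨ is ∂_{t_i}Ψ, and the
dt_i ∧ dt_j-component of a wedge α ∧ ω is αᵢωⱼ - αⱼωᵢ. -/

lemma pd_eval {n : ℕ} (i j : Fin n) (p : Fin n → ℝ) :
    fderiv ℝ (fun x : Fin n → ℝ => x j) p (Pi.single i 1)
      = if j = i then (1:ℝ) else 0 := by
  have h : (fun x : Fin n → ℝ => x j)
      = (ContinuousLinearMap.proj j : (Fin n → ℝ) →L[ℝ] ℝ) := rfl
  rw [h, ContinuousLinearMap.fderiv]
  simp [Pi.single_apply]

/-- the dt_j-component of the 1-form ω = Σ_{n≥0} λⁿ dt_{n+1}: it is λ^{j-1} = X^{1-j}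
for j ≥ 1 and 0 for j = 0. -/
noncomputable def omegaForm {N : ℕ} (j : Fin (N + 1)) : LaurentSeries ℝ :=
  if j = 0 then 0 else HahnSeries.single (1 - (j : ℤ)) (1 : ℝ)

theorem stmt16 (N : ℕ)
    -- coefficients of Ψ and Ψ' : `Ψc n` is the coefficient of λⁿ, n ∈ ℤ
    (Ψc Ψ'c : ℤ → (Fin (N + 1) → ℝ) → ℝ)
    (hΨsm : ∀ n, ContDiff ℝ (⊤ : ℕ∞) (Ψc n))
    -- vacuum part of Ψ: coefficient of λⁿ for 0 ≤ n ≤ N is t_n, zero above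
    (hvac : ∀ i : Fin (N + 1), ∀ p, Ψc ((i : ℕ) : ℤ) p = p i)
    (hvac' : ∀ n : ℤ, (N : ℤ) < n → Ψc n = 0)
    -- Ψ' = x + Ψ̃ : same negative part, λ⁰-coefficient x = t₀, no positive part
    (hΨ'neg : ∀ n : ℤ, n < 0 → Ψ'c n = Ψc n)
    (hΨ'0 : ∀ p, Ψ'c 0 p = p 0)
    (hΨ'pos : ∀ n : ℤ, 0 < n → Ψ'c n = 0)
    -- the differentials dΨ, dΨ' as Laurent-series-valued components
    (dΨ dΨ' : Fin (N + 1) → (Fin (N + 1) → ℝ) → LaurentSeries ℝ)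
    (hdΨ : ∀ i p (m : ℤ), (dΨ i p).coeff m = pd i (Ψc (-m)) p)
    (hdΨ' : ∀ i p (m : ℤ), (dΨ' i p).coeff m = pd i (Ψ'c (-m)) p)
    -- J = Ψ_x⁻¹ (note Ψ'_x = Ψ_x since Ψ - Ψ' does not depend on x = t₀)
    (J : (Fin (N + 1) → ℝ) → LaurentSeries ℝ)
    (hJ : ∀ p, J p * dΨ 0 p = 1)
    -- generating relation of the universal hierarchy: (Ψ_x⁻¹ dΨ)₋ = 0
    (hgen : ∀ (i : Fin (N + 1)) p (m : ℤ), 0 < m → (J p * dΨ i p).coeff m = 0) :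
    -- generating relation of the four-dimensional universal hierarchy:
    -- ((Ψ'_x)⁻¹ dΨ' ∧ Σ λⁿ dt_{n+1})₋ = 0, componentwise in (i,j)
    ∀ (i j : Fin (N + 1)) p (m : ℤ), 0 < m →
      (J p * (dΨ' i p * omegaForm j - dΨ' j p * omegaForm i)).coeff m = 0 := by
  intro i j p m hm
  -- coefficientwise difference of the partial derivatives of Ψ and Ψ'
  have hdiff : ∀ (k : Fin (N + 1)) (n : ℤ),
      pd k (Ψc n) p - pd k (Ψ'c n) p
        = if (n = ((k : ℕ) : ℤ) ∧ k ≠ 0) then (1 : ℝ) else 0 := by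
    intro k n
    rcases lt_trichotomy n 0 with hn | hn | hn
    · rw [hΨ'neg n hn, sub_self, if_neg]
      rintro ⟨rfl, hk0⟩
      have : (0 : ℤ) ≤ ((k : ℕ) : ℤ) := Int.natCast_nonneg _
      omega
    · subst hn
      have h0 : Ψc 0 = Ψ'c 0 := by
        funext q
        rw [hΨ'0 q]
        have := hvac 0 q
        simpa using this
      rw [h0, sub_self, if_neg]
      rintro ⟨h1, hk0⟩
      exact hk0 (Fin.ext (by rw [Fin.val_zero]; omega))
    · rcases le_or_gt n (N : ℤ) with hN | hN
      · -- 0 < n ≤ N : Ψc n = eval, Ψ'c n = 0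
        set k' : Fin (N + 1) := ⟨n.toNat, by omega⟩ with hk'
        have hc : Ψc n = fun q => q k' := by
          funext q
          have := hvac k' q
          have hcast : (((k' : ℕ) : ℤ)) = n := by simp [hk']; omega
          rwa [hcast] at this
        have hc' : Ψ'c n = 0 := hΨ'pos n hn
        rw [hc, hc']
        have h0 : pd k (0 : (Fin (N+1) → ℝ) → ℝ) p = 0 := by
          have hz : (0 : (Fin (N+1) → ℝ) → ℝ) = fun _ => (0:ℝ) := rfl
          rw [pd, hz]
          simp
        rw [h0, sub_zero]
        show fderiv ℝ (fun q : Fin (N+1) → ℝ => q k') p (Pi.single k 1) = _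
        rw [pd_eval]
        by_cases hkk : k' = k
        · rw [if_pos hkk, if_pos]
          constructor
          · rw [← hkk]; simp [hk']; omega
          · intro hk0
            rw [← hkk] at hk0
            have : n.toNat = 0 := by
              have := Fin.val_eq_val k' 0
              simpa [hk', Fin.ext_iff] using hk0
            omega
        · rw [if_neg hkk, if_neg]
          rintro ⟨h1, -⟩
          apply hkk
          apply Fin.ext
          simp [hk']
          omega
      · rw [hvac' n hN, hΨ'pos n hn, sub_self, if_neg]
        rintro ⟨rfl, -⟩
        have : (k : ℕ) ≤ N := Nat.lt_succ_iff.mp k.isLt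
        omega
  -- hence dΨ' k p = dΨ k p - single(-1) * ω k
  have key : ∀ k : Fin (N + 1),
      dΨ' k p = dΨ k p - HahnSeries.single (-1 : ℤ) (1 : ℝ) * omegaForm k := by
    intro k
    ext n
    rw [HahnSeries.coeff_sub, hdΨ, hdΨ']
    have hd := hdiff k (-n)
    have hcoef : (HahnSeries.single (-1 : ℤ) (1 : ℝ) * omegaForm k).coeff n
        = if (-n = ((k : ℕ) : ℤ) ∧ k ≠ 0) then (1 : ℝ) else 0 := by
      by_cases hk0 : k = 0
      · simp [omegaForm, hk0]
      · rw [omegaForm, if_neg hk0, HahnSeries.single_mul_single]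
        rw [HahnSeries.coeff_single]
        have : (-1 + (1 - ((k : ℕ) : ℤ))) = -((k : ℕ) : ℤ) := by ring
        rw [this]
        by_cases hnn : n = -((k : ℕ) : ℤ)
        · rw [if_pos hnn, if_pos ⟨by omega, hk0⟩]; norm_num
        · rw [if_neg hnn, if_neg]
          rintro ⟨h1, -⟩
          omega
    linarith [hd, hcoef]
  -- algebra: the wedge correction cancels
  have halg : J p * (dΨ' i p * omegaForm j - dΨ' j p * omegaForm i)
      = (J p * dΨ i p) * omegaForm j - (J p * dΨ j p) * omegaForm i := by
    rw [key i, key j]; ring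
  rw [halg, HahnSeries.coeff_sub]
  have hterm : ∀ (a b : Fin (N + 1)),
      ((J p * dΨ a p) * omegaForm b).coeff m = 0 := by
    intro a b
    by_cases hb : b = 0
    · simp [omegaForm, hb]
    · rw [omegaForm, if_neg hb]
      have hb1 : 1 ≤ ((b : ℕ) : ℤ) := by
        have : b.val ≠ 0 := fun h => hb (Fin.ext h)
        omega
      have hm' : m = (m - (1 - ((b : ℕ) : ℤ))) + (1 - ((b : ℕ) : ℤ)) := by ring
      rw [hm', HahnSeries.coeff_mul_single_add, mul_one]
      exact hgen a p _ (by omega)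
  rw [hterm i j, hterm j i, sub_self]
end
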